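/- arXiv:1310.6699 — 5 statements merged into one kernel-verified Lean document; each statement's English description precedes it below -/
import Mathlib

section
/- For λ ∈ ℂ and k ≥ 1, let C_k(λ) be the 2k×2k real block matrix with k diagonal blocks C(λ) = [[Re λ, Im λ], [−Im λ, Re λ]] and 2×2 identity blocks on the first block superdiagonal. Let S_k be the block-diagonal matrix with k copies of S = [[−i, −i], [1, −1]]. Then S_k⁻¹·C_k(λ)·S_k equals the block matrix D_k(λ) with diagonal blocks diag(λ, conj(λ)) and identity blocks on the first block superdiagonal. -/
/-- The 2×2 block `C(λ) = [[Re λ, Im λ], [−Im λ, Re λ]]` (viewed in `ℂ`). -/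
def Cblk (z : ℂ) : Matrix (Fin 2) (Fin 2) ℂ :=
  !![(z.re : ℂ), (z.im : ℂ); -(z.im : ℂ), (z.re : ℂ)]

/-- `S = [[−i, −i], [1, −1]]`. -/
def Smat : Matrix (Fin 2) (Fin 2) ℂ := !![-Complex.I, -Complex.I; 1, -1]

/-- The real Jordan block `C_k(λ)`: `k` diagonal blocks `C(λ)` and `I₂` on the
first block superdiagonal (rows/columns indexed by `Fin k × Fin 2`). -/
def Ck (k : ℕ) (z : ℂ) : Matrix (Fin k × Fin 2) (Fin k × Fin 2) ℂ :=
  Matrix.of fun p q =>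
    if p.1 = q.1 then Cblk z p.2 q.2
    else if (p.1 : ℕ) + 1 = (q.1 : ℕ) then (1 : Matrix (Fin 2) (Fin 2) ℂ) p.2 q.2
    else 0

/-- `S_k = ⊕_{i=1}^k S`. -/
def Sk (k : ℕ) : Matrix (Fin k × Fin 2) (Fin k × Fin 2) ℂ :=
  Matrix.of fun p q => if p.1 = q.1 then Smat p.2 q.2 else 0

/-- The 2×2 block `D(λ) = diag(λ, conj λ)`. -/
def Dblk (z : ℂ) : Matrix (Fin 2) (Fin 2) ℂ := !![z, 0; 0, starRingEnd ℂ z]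

/-- `D_k(λ)`: diagonal blocks `diag(λ, conj λ)` and `I₂` on the superdiagonal. -/
def Dk (k : ℕ) (z : ℂ) : Matrix (Fin k × Fin 2) (Fin k × Fin 2) ℂ :=
  Matrix.of fun p q =>
    if p.1 = q.1 then Dblk z p.2 q.2
    else if (p.1 : ℕ) + 1 = (q.1 : ℕ) then (1 : Matrix (Fin 2) (Fin 2) ℂ) p.2 q.2
    else 0

/-!
Write `S_k = I_k ⊗ S` and `C_k(λ) = I_k ⊗ C(λ) + N_k ⊗ I₂`, where `N_k` is the nilpotent shift.
By the mixed-product rule, conjugating by `I_k ⊗ S` acts blockwise, so it turns `C_k(λ)` into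
`I_k ⊗ S⁻¹C(λ)S + N_k ⊗ I₂`; and `S⁻¹C(λ)S = diag(λ, conj λ)` since the columns of `S`
are eigenvectors of `C(λ)`.
-/

open Matrix
open scoped Kronecker

namespace Matrix

variable {R : Type*} [CommRing R] {n : Type*} [DecidableEq n]

def superdiagonal (k : ℕ) : Matrix (Fin k) (Fin k) R :=
  of fun i j => if (i : ℕ) + 1 = j then 1 else 0

def blockBidiagonal (k : ℕ) (B : Matrix n n R) : Matrix (Fin k × n) (Fin k × n) R :=
  1 ⊗ₖ B + superdiagonal k ⊗ₖ 1

theorem of_ite_eq_blockBidiagonal (k : ℕ) (B : Matrix n n R) :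
    of (fun p q : Fin k × n =>
      if p.1 = q.1 then B p.2 q.2 else if (p.1 : ℕ) + 1 = q.1 then (1 : Matrix n n R) p.2 q.2
      else 0) = blockBidiagonal k B := by
  ext ⟨i, a⟩ ⟨j, b⟩
  rcases eq_or_ne i j with rfl | hij
  · simp [blockBidiagonal, superdiagonal]
  · simp [blockBidiagonal, superdiagonal, hij]

theorem one_kronecker_inv_mul_kronecker_mul_one_kronecker [Fintype n] {l : Type*} [Fintype l]
    [DecidableEq l] (S : Matrix n n R) (M : Matrix l l R) (A : Matrix n n R) :
    (1 ⊗ₖ S)⁻¹ * (M ⊗ₖ A) * (1 ⊗ₖ S) = M ⊗ₖ (S⁻¹ * A * S) := by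
  rw [inv_kronecker, inv_one, ← mul_kronecker_mul, ← mul_kronecker_mul, Matrix.one_mul,
    Matrix.mul_one]

theorem one_kronecker_inv_mul_blockBidiagonal_mul_one_kronecker [Fintype n] (k : ℕ)
    (S : Matrix n n R) (hS : IsUnit S.det) (B : Matrix n n R) :
    (1 ⊗ₖ S)⁻¹ * blockBidiagonal k B * (1 ⊗ₖ S) = blockBidiagonal k (S⁻¹ * B * S) := by
  rw [blockBidiagonal, Matrix.mul_add, Matrix.add_mul,
    one_kronecker_inv_mul_kronecker_mul_one_kronecker S,
    one_kronecker_inv_mul_kronecker_mul_one_kronecker S, Matrix.mul_one, nonsing_inv_mul S hS,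
    blockBidiagonal]

end Matrix

theorem Sk_eq_one_kronecker (k : ℕ) : Sk k = 1 ⊗ₖ Smat := by
  ext ⟨i, a⟩ ⟨j, b⟩
  simp [Sk, one_apply]

theorem isUnit_det_Smat : IsUnit Smat.det := by
  simp [Smat, det_fin_two_of]

theorem Cblk_mul_Smat (z : ℂ) : Cblk z * Smat = Smat * Dblk z := by
  ext a b
  fin_cases a <;> fin_cases b <;>
    simp [Cblk, Smat, Dblk, Complex.ext_iff]

theorem Smat_inv_mul_Cblk_mul_Smat (z : ℂ) : Smat⁻¹ * Cblk z * Smat = Dblk z := by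
  rw [Matrix.mul_assoc, Cblk_mul_Smat, nonsing_inv_mul_cancel_left _ _ isUnit_det_Smat]

theorem stmt_5_general (k : ℕ) (z : ℂ) :
    (Sk k)⁻¹ * Ck k z * Sk k = Dk k z := by
  rw [Sk_eq_one_kronecker, Ck, Dk, of_ite_eq_blockBidiagonal, of_ite_eq_blockBidiagonal,
    one_kronecker_inv_mul_blockBidiagonal_mul_one_kronecker k Smat isUnit_det_Smat,
    Smat_inv_mul_Cblk_mul_Smat]

/-- `S_k⁻¹ · C_k(λ) · S_k = D_k(λ)`. -/
theorem stmt_5 (k : ℕ) (hk : 1 ≤ k) (z : ℂ) :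
    (Sk k)⁻¹ * Ck k z * Sk k = Dk k z :=
  stmt_5_general k z
end

section
/- If λ < 0 is a negative real number and J_k(λ) is the k×k Jordan block, then the 2k×2k matrix J_k(λ) ⊕ J_k(λ) is similar via a permutation matrix to C_k(λ): specifically, P_k·(J_k(λ) ⊕ J_k(λ))·P_kᵀ = C_k(λ), where C_k(λ) for real λ has diagonal blocks λ·I₂ and identity superdiagonal blocks. -/
/-!
`P_k` is the permutation matrix of the shuffle `Fin k × Fin 2 ≃ Fin k ⊕ Fin k` sending `(i, a)`
to `i` in the `a`-th summand, so conjugating by it reindexes `J_k(λ) ⊕ J_k(λ)` along the shuffle.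
The result has entry `J_k(λ)ᵢⱼ` at `((i, a), (j, b))` when `a = b` and `0` otherwise: it is the
block diagonal matrix with two copies of `J_k(λ)` indexed by the second coordinate, and so is
`C_k(λ)`.
-/

open Matrix

/-- The `k×k` real Jordan block `J_k(λ)`. -/
def JordanBlockR (k : ℕ) (lam : ℝ) : Matrix (Fin k) (Fin k) ℝ :=
  Matrix.of fun i j => if i = j then lam else if (i : ℕ) + 1 = (j : ℕ) then 1 else 0

/-- For real `λ`, `C(λ) = λ·I₂`, so `C_k(λ)` has diagonal blocks `λ·I₂` and `I₂`
on the first block superdiagonal. -/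
def CkR (k : ℕ) (lam : ℝ) : Matrix (Fin k × Fin 2) (Fin k × Fin 2) ℝ :=
  Matrix.of fun p q =>
    if p.1 = q.1 then (if p.2 = q.2 then lam else 0)
    else if (p.1 : ℕ) + 1 = (q.1 : ℕ) then (if p.2 = q.2 then 1 else 0)
    else 0

/-- The perfect-shuffle permutation matrix `P_k` with columns
`e₁, e₃, …, e_{2k−1}, e₂, e₄, …, e_{2k}`. -/
def PmatR (k : ℕ) : Matrix (Fin k × Fin 2) (Fin k ⊕ Fin k) ℝ :=
  Matrix.of fun p q =>
    match q with
    | Sum.inl i => if p = (i, 0) then 1 else 0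
    | Sum.inr i => if p = (i, 1) then 1 else 0

@[simps]
def Equiv.prodFinTwoEquivSum (α : Type*) : α × Fin 2 ≃ α ⊕ α where
  toFun p := if p.2 = 0 then .inl p.1 else .inr p.1
  invFun := Sum.elim (·, 0) (·, 1)
  left_inv := by rintro ⟨a, i⟩; fin_cases i <;> rfl
  right_inv := by rintro (a | a) <;> rfl

-- Without the ascriptions the products elaborate with `CStarMatrix`'s multiplication instance.
theorem Matrix.toMatrix_toPEquiv_mul_mul_transpose {m n α : Type*} [Fintype m] [Fintype n]
    [DecidableEq m] [DecidableEq n] [Semiring α] (f : m ≃ n) (M : Matrix n n α) :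
    (f.toPEquiv.toMatrix : Matrix m n α) * M * (f.toPEquiv.toMatrix : Matrix m n α)ᵀ =
      M.submatrix f f := by
  rw [PEquiv.toMatrix_toPEquiv_mul, ← PEquiv.toMatrix_symm, ← Equiv.toPEquiv_symm,
    PEquiv.mul_toMatrix_toPEquiv, Equiv.symm_symm, submatrix_submatrix]
  rfl

theorem Matrix.fromBlocks_submatrix_prodFinTwoEquivSum {n α : Type*} [DecidableEq n] [Zero α]
    (A : Matrix n n α) :
    (fromBlocks A 0 0 A).submatrix (Equiv.prodFinTwoEquivSum n) (Equiv.prodFinTwoEquivSum n) =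
      blockDiagonal fun _ => A := by
  ext ⟨i, a⟩ ⟨j, b⟩
  fin_cases a <;> fin_cases b <;> simp [blockDiagonal_apply]

theorem PmatR_eq_toMatrix_toPEquiv (k : ℕ) :
    PmatR k = (Equiv.prodFinTwoEquivSum (Fin k)).toPEquiv.toMatrix := by
  ext ⟨j, a⟩ (i | i) <;> fin_cases a <;> simp [PmatR, PEquiv.toMatrix_apply]

theorem CkR_eq_blockDiagonal (k : ℕ) (lam : ℝ) :
    CkR k lam = blockDiagonal fun _ => JordanBlockR k lam := by
  ext ⟨i, a⟩ ⟨j, b⟩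
  by_cases hab : a = b <;> simp [CkR, JordanBlockR, blockDiagonal_apply, hab]

theorem stmt_8_general (k : ℕ) (lam : ℝ) :
    PmatR k * Matrix.fromBlocks (JordanBlockR k lam) 0 0 (JordanBlockR k lam) * (PmatR k)ᵀ
      = CkR k lam := by
  rw [PmatR_eq_toMatrix_toPEquiv, toMatrix_toPEquiv_mul_mul_transpose,
    fromBlocks_submatrix_prodFinTwoEquivSum, CkR_eq_blockDiagonal]

/-- for a negative real eigenvalue `λ`,
`P_k·(J_k(λ) ⊕ J_k(λ))·P_kᵀ = C_k(λ)`. -/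
theorem stmt_8 (k : ℕ) (lam : ℝ) (hlam : lam < 0) :
    PmatR k * Matrix.fromBlocks (JordanBlockR k lam) 0 0 (JordanBlockR k lam) * (PmatR k)ᵀ
      = CkR k lam :=
  stmt_8_general k lam
end

section
/- If A is a nonsingular real n×n matrix with at least one negative real eigenvalue appearing in an odd number of Jordan blocks of some size, and p is even, then A has no real primary pth-root; in particular, a nonsingular real matrix with a simple negative eigenvalue has no real primary pth-root when p is even. -/
/-!
Suppose `Y` is a real matrix with `Y ^ p = A`. With `g = X ^ p - C λ`, every power of
`N = A - λ • 1` is `gʲ(Y)`, and since `p` is even and `λ < 0` the polynomial `gʲ` has no real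
root. On the `Y`-invariant subspace `ker gʲ(Y)` the restriction of `Y` is annihilated by `gʲ`,
so it has no real eigenvalue; its characteristic polynomial then has no real root, hence even
degree. Thus every `ker Nʲ` has even dimension, all `rank Nʲ` have the parity of `n`
(complexification does not change the rank), and the Jordan block count
`rank Nᵐ⁻¹ + rank Nᵐ⁺¹ - 2 rank Nᵐ` is even.
-/

open Polynomial Module Matrix

namespace Polynomial

theorem IsMonicOfDegree.even_of_forall_not_isRoot {f : ℝ[X]} {n : ℕ} (hf : IsMonicOfDegree f n)
    (hroot : ∀ x, ¬ f.IsRoot x) : Even n := by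
  induction n using Nat.twoStepInduction generalizing f with
  | zero => exact Even.zero
  | one =>
    obtain ⟨x, hx⟩ := exists_root_of_degree_eq_one <|
      (degree_eq_iff_natDegree_eq_of_pos one_pos).2 hf.natDegree_eq
    exact absurd hx (hroot x)
  | more n ih _ =>
    obtain ⟨f₁, f₂, -, hf₂, rfl⟩ := hf.eq_isMonicOfDegree_two_mul_isMonicOfDegree
    exact (ih hf₂ fun x hx => hroot x (hx.dvd (dvd_mul_left _ _))).add even_two

end Polynomial

namespace Module.End

theorem aeval_restrict_apply {R M : Type*} [CommSemiring R] [AddCommMonoid M] [Module R M]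
    {f : End R M} {p : Submodule R M} (hf : ∀ x ∈ p, f x ∈ p) (q : R[X]) (v : p) :
    (aeval (f.restrict hf) q v : M) = aeval f q v := by
  induction q using Polynomial.induction_on generalizing v with
  | C a => simp [Module.algebraMap_end_apply]
  | add q r hq hr => simp [hq, hr]
  | monomial k a ih =>
    simp only [pow_succ, ← mul_assoc, map_mul, aeval_X, mul_apply] at ih ⊢
    exact ih _

variable {V : Type*} [AddCommGroup V] [Module ℝ V] [FiniteDimensional ℝ V] {g : ℝ[X]}

theorem even_finrank_of_aeval_eq_zero (hg : ∀ x, g.eval x ≠ 0) {f : End ℝ V}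
    (hf : aeval f g = 0) : Even (finrank ℝ V) := by
  refine (IsMonicOfDegree.mk (LinearMap.charpoly_natDegree f)
    f.charpoly_monic).even_of_forall_not_isRoot fun x hx => ?_
  obtain ⟨v, hv⟩ := ((hasEigenvalue_iff_isRoot_charpoly f x).2 hx).exists_hasEigenvector
  have hgv := aeval_apply_of_hasEigenvector (p := g) hv
  rw [hf, LinearMap.zero_apply, eq_comm, smul_eq_zero] at hgv
  exact hgv.elim (hg x) hv.2

theorem even_finrank_ker_aeval (hg : ∀ x, g.eval x ≠ 0) (f : End ℝ V) :
    Even (finrank ℝ (LinearMap.ker (aeval f g))) := by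
  have hf : ∀ v ∈ LinearMap.ker (aeval f g), f v ∈ LinearMap.ker (aeval f g) := fun v hv => by
    have hcomm := ((commute_X g).map (aeval f)).eq
    rw [aeval_X] at hcomm
    rw [LinearMap.mem_ker, ← mul_apply, ← hcomm, mul_apply, hv, map_zero]
  refine even_finrank_of_aeval_eq_zero hg (f := f.restrict hf) (LinearMap.ext fun v => ?_)
  exact Subtype.ext ((aeval_restrict_apply hf g v).trans v.2)

end Module.End

namespace Matrix

theorem even_card_sub_rank_aeval {ι : Type*} [Fintype ι] [DecidableEq ι] (Y : Matrix ι ι ℝ)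
    {g : ℝ[X]} (hg : ∀ x, g.eval x ≠ 0) : Even (Fintype.card ι - (aeval Y g).rank) := by
  have hlin : (aeval Y g).mulVecLin = aeval Y.mulVecLin g := by
    change toLinAlgEquiv' (aeval Y g) = aeval (toLinAlgEquiv' Y) g
    exact (aeval_algHom_apply toLinAlgEquiv'.toAlgHom Y g).symm
  have hrank := (aeval Y g).mulVecLin.finrank_range_add_finrank_ker
  rw [finrank_fintype_fun_eq_card] at hrank
  rw [rank, ← hrank, Nat.add_sub_cancel_left, hlin]
  exact Module.End.even_finrank_ker_aeval hg _

theorem rank_fromBlocks_one_zero {R : Type*} [Field R] (r : ℕ) (ι : Type*) [Fintype ι] :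
    (fromBlocks (1 : Matrix (Fin r) (Fin r) R) 0 0 (0 : Matrix ι ι R)).rank = r := by
  classical
  rw [← diagonal_one, ← diagonal_zero, fromBlocks_diagonal, rank_diagonal, Fintype.card_subtype,
    Finset.card_filter, Fintype.sum_sum_type]
  simp

theorem rank_map_ringHom {K L : Type*} [Field K] [Field L] {ι : Type*} [Fintype ι]
    [DecidableEq ι] (f : K →+* L) (M : Matrix ι ι K) : (M.map f).rank = M.rank := by
  obtain ⟨V, U, e, hV, hU, hVMU⟩ := exists_rank_normal_form M
  have hdet : ∀ {W : Matrix ι ι K}, IsUnit W → IsUnit (W.map f).det := fun hW => by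
    rw [← RingHom.mapMatrix_apply, ← RingHom.map_det]
    exact ((isUnit_iff_isUnit_det _).1 hW).map f
  have hmap := congrArg f.mapMatrix hVMU
  simp only [map_mul, RingHom.mapMatrix_apply] at hmap
  rw [← rank_mul_eq_right_of_isUnit_det _ _ (hdet hV),
    ← rank_mul_eq_left_of_isUnit_det _ _ (hdet hU), hmap, ← submatrix_map, fromBlocks_map,
    Matrix.map_one _ f.map_zero f.map_one]
  simp only [Matrix.map_zero _ f.map_zero]
  rw [rank_submatrix, rank_fromBlocks_one_zero]

end Matrix

/-- `rank Nᵐ⁻¹ + rank Nᵐ⁺¹ - 2 rank Nᵐ`, with `N = A - λ • 1` over `ℂ`, counts the Jordan blocks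
of size `m` for `λ`; a primary root is one that is a polynomial in `A`. -/
theorem stmt_10_general (n p : ℕ) (hp : Even p)
    (A : Matrix (Fin n) (Fin n) ℝ)
    (lam : ℝ) (hlam : lam < 0) (m : ℕ)
    (hodd : Odd
      (((((A.map (Complex.ofReal)) - (lam : ℂ) • 1) ^ (m - 1)).rank : ℤ)
        + ((((A.map (Complex.ofReal)) - (lam : ℂ) • 1) ^ (m + 1)).rank : ℤ)
        - 2 * ((((A.map (Complex.ofReal)) - (lam : ℂ) • 1) ^ m).rank : ℤ))) :
    ¬ ∃ (X : Matrix (Fin n) (Fin n) ℝ) (q : Polynomial ℂ),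
        X.map (Complex.ofReal) = Polynomial.aeval (A.map (Complex.ofReal)) q ∧ X ^ p = A := by
  rintro ⟨Y, -, -, hYp⟩
  set N := A.map Complex.ofReal - (lam : ℂ) • 1
  have hN : N = Complex.ofRealHom.mapMatrix (aeval Y (X ^ p - C lam)) := by
    ext i j
    by_cases h : i = j <;> simp [N, h, hYp, Algebra.algebraMap_eq_smul_one]
  have hroots (j : ℕ) (x : ℝ) : ((X ^ p - C lam) ^ j : ℝ[X]).eval x ≠ 0 := by
    simp only [eval_pow, eval_sub, eval_X, eval_C]
    exact pow_ne_zero j (by linarith [hp.pow_nonneg x] : 0 < x ^ p - lam).ne'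
  have hparity (j : ℕ) : (N ^ j).rank % 2 = n % 2 := by
    obtain ⟨k, hk⟩ := even_card_sub_rank_aeval Y (hroots j)
    have hle := (N ^ j).rank_le_width
    rw [hN, ← map_pow, ← map_pow, RingHom.mapMatrix_apply, rank_map_ringHom] at hle ⊢
    rw [Fintype.card_fin] at hk
    omega
  obtain ⟨t, ht⟩ := hodd
  have := hparity (m - 1)
  have := hparity (m + 1)
  have := hparity m
  omega

/-- if the nonsingular real matrix `A` has a negative real
eigenvalue `λ` appearing in an odd number of Jordan blocks of some size `m`
(the number of Jordan blocks of size `m` for `λ` being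
`rank N^{m−1} + rank N^{m+1} − 2·rank N^m` where `N = A − λI` over `ℂ`),
and `p` is even, then `A` has no real primary `p`th-root, i.e. no real `p`th-root
expressible as a polynomial in `A`.  (In particular this applies when `λ` is a
simple negative eigenvalue, which occurs in exactly one Jordan block, of size 1.) -/
theorem stmt_10 (n p : ℕ) (hp : Even p) (hp1 : 0 < p)
    (A : Matrix (Fin n) (Fin n) ℝ) (hA : IsUnit A)
    (lam : ℝ) (hlam : lam < 0) (m : ℕ) (hm : 1 ≤ m)
    (hodd : Odd
      (((((A.map (Complex.ofReal)) - (lam : ℂ) • 1) ^ (m - 1)).rank : ℤ)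
        + ((((A.map (Complex.ofReal)) - (lam : ℂ) • 1) ^ (m + 1)).rank : ℤ)
        - 2 * ((((A.map (Complex.ofReal)) - (lam : ℂ) • 1) ^ m).rank : ℤ))) :
    ¬ ∃ (X : Matrix (Fin n) (Fin n) ℝ) (q : Polynomial ℂ),
        X.map (Complex.ofReal) = Polynomial.aeval (A.map (Complex.ofReal)) q ∧ X ^ p = A :=
  stmt_10_general n p hp A lam hlam m hodd
end

section
/- If A is an eventually positive real matrix and X is a real matrix with X^p = A such that X has the strong Perron-Frobenius property and Xᵀ has the strong Perron-Frobenius property, then X is eventually positive. -/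
open Matrix

/-- `A` is eventually positive. -/
def EvPos {n : ℕ} (A : Matrix (Fin n) (Fin n) ℝ) : Prop :=
  ∃ N : ℕ, ∀ k, N ≤ k → ∀ i j, 0 < (A ^ k) i j

/-- Strong Perron-Frobenius property. -/
def StrongPF {n : ℕ} (A : Matrix (Fin n) (Fin n) ℝ) : Prop :=
  ∃ ρ : ℝ, 0 < ρ ∧
    (Matrix.charpoly A).rootMultiplicity ρ = 1 ∧
    (∀ μ : ℂ, μ ∈ spectrum ℂ (A.map Complex.ofReal) → μ ≠ (ρ : ℂ) → ‖μ‖ < ρ) ∧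
    ∃ v : Fin n → ℝ, (∀ i, 0 < v i) ∧ A.mulVec v = ρ • v

/-!
Some power `X ^ q = A ^ N` (`q > 0`) is entrywise positive; when `p = 0` this is `X` itself, since
`A = 1` being eventually positive forces `n ≤ 1`. With `X v = ρ v`, `v > 0`, the rescaled
`C = ρ ^ (-q) • X ^ q` fixes `v`, so conjugating by `diagonal v` turns it into a positive
row-stochastic matrix `P`. The columns of `P ^ m` have oscillation decaying geometrically and
minimum bounded below by the smallest entry of `P`, so `b ᵥ* P ^ m` is eventually positive when
`∑ b > 0`; transported back, `a ᵥ* C ^ m` is eventually positive when `a ⬝ᵥ v > 0`. The rows of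
`X ^ r` qualify, as `X ^ r *ᵥ v = ρ ^ r • v`, so `X ^ (r + q * m) = ρ ^ (q * m) • X ^ r * C ^ m`
is positive for large `m` and every residue `r < q`.
-/

open Finset Filter

theorem Nat.eventually_atTop_of_forall_add_mul {P : ℕ → Prop} {q : ℕ} (hq : 0 < q)
    (h : ∀ r < q, ∀ᶠ m in atTop, P (r + q * m)) : ∀ᶠ k in atTop, P k := by
  obtain ⟨M, hM⟩ := eventually_atTop.1 <| eventually_all.2 fun r : Fin q => h r r.2
  refine eventually_atTop.2 ⟨q * M, fun k hk => ?_⟩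
  have h := hM (k / q) ((Nat.le_div_iff_mul_le hq).2 (by linarith)) ⟨k % q, Nat.mod_lt k hq⟩
  rwa [Nat.mod_add_div] at h

namespace Matrix

variable {ι : Type*}

theorem subsingleton_of_forall_one_apply_pos [DecidableEq ι] {R : Type*} [Zero R] [One R]
    [Preorder R] (h : ∀ i j, (0 : R) < (1 : Matrix ι ι R) i j) : Subsingleton ι :=
  ⟨fun i j => by_contra fun hij => (h i j).ne' (one_apply_ne hij)⟩

variable [Fintype ι]

theorem apply_pos_of_subsingleton_of_mulVec_eq_smul [Subsingleton ι] {X : Matrix ι ι ℝ}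
    {v : ι → ℝ} {ρ : ℝ} (hρ : 0 < ρ) (hv : ∀ i, 0 < v i) (hXv : X *ᵥ v = ρ • v) (i j : ι) :
    0 < X i j := by
  have h := congrFun hXv i
  simp only [mulVec, dotProduct, Fintype.sum_subsingleton _ j, Pi.smul_apply, smul_eq_mul] at h
  exact (mul_pos_iff_of_pos_right (hv j)).1 (h ▸ mul_pos hρ (hv i))

theorem sum_mul_sub_le_dotProduct (b : ι → ℝ) {y : ι → ℝ} {lo w : ℝ}
    (hy : ∀ l, y l ∈ Set.Icc lo (lo + w)) :
    (∑ l, b l) * lo - (∑ l, |b l|) * w ≤ b ⬝ᵥ y := by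
  have hterm : ∀ l, -(|b l| * w) ≤ b l * (y l - lo) := fun l => by
    have h := neg_abs_le (b l * (y l - lo))
    rw [abs_mul, abs_of_nonneg (sub_nonneg.2 (hy l).1)] at h
    have : |b l| * (y l - lo) ≤ |b l| * w :=
      mul_le_mul_of_nonneg_left (by linarith [(hy l).2]) (abs_nonneg _)
    linarith
  have hsum := Finset.sum_le_sum fun l (_ : l ∈ univ) => hterm l
  simp only [Finset.sum_neg_distrib, mul_sub, Finset.sum_sub_distrib] at hsum
  rw [Finset.sum_mul, Finset.sum_mul, dotProduct]
  linarith

section Stochastic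

variable {P : Matrix ι ι ℝ} {δ : ℝ}

theorem sum_row_eq_one_of_mulVec_one (hP : P *ᵥ 1 = 1) (i : ι) : ∑ l, P i l = 1 := by
  simpa [mulVec, dotProduct] using congrFun hP i

/-- Writing `P = δ J + (P - δ J)` with `J` the all-ones matrix, the second part has nonnegative
rows summing to `1 - |ι| δ`, so it shrinks the width of any interval containing `x` by that
factor. -/
theorem mulVec_apply_mem_Icc (hP : P *ᵥ 1 = 1) (hPδ : ∀ i l, δ ≤ P i l) {x : ι → ℝ}
    {lo hi : ℝ} (hx : ∀ l, x l ∈ Set.Icc lo hi) (i : ι) :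
    (P *ᵥ x) i ∈ Set.Icc (δ * ∑ l, x l + (1 - Fintype.card ι * δ) * lo)
      (δ * ∑ l, x l + (1 - Fintype.card ι * δ) * hi) := by
  have hsplit : (P *ᵥ x) i = δ * ∑ l, x l + ∑ l, (P i l - δ) * x l := by
    simp [mulVec, dotProduct, sub_mul, Finset.sum_sub_distrib, Finset.mul_sum]
  have hweight : ∑ l, (P i l - δ) = 1 - Fintype.card ι * δ := by
    simp [Finset.sum_sub_distrib, sum_row_eq_one_of_mulVec_one hP]
  rw [hsplit, ← hweight, Finset.sum_mul, Finset.sum_mul]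
  constructor <;> gcongr with l <;> first
    | exact sub_nonneg.2 (hPδ i l) | exact (hx l).1 | exact (hx l).2

variable [DecidableEq ι]

theorem exists_pow_apply_mem_Icc (hP : P *ᵥ 1 = 1) (hPδ : ∀ i l, δ ≤ P i l) (hδ : 0 ≤ δ)
    (j : ι) {m : ℕ} (hm : 1 ≤ m) :
    ∃ lo, δ ≤ lo ∧ ∀ l, (P ^ m) l j ∈ Set.Icc lo (lo + (1 - Fintype.card ι * δ) ^ m) := by
  induction m, hm using Nat.le_induction with
  | base =>
    refine ⟨δ, le_rfl, fun l => ?_⟩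
    have h := mulVec_apply_mem_Icc hP hPδ (x := Pi.single j 1) (lo := 0) (hi := 1)
      (fun l => by by_cases h : l = j <;> simp [h]) l
    simpa [mulVec_single_one] using h
  | succ m _ ih =>
    obtain ⟨lo, hδlo, hlo⟩ := ih
    set κ := 1 - Fintype.card ι * δ
    refine ⟨δ * ∑ l, (P ^ m) l j + κ * lo, ?_, fun i => ?_⟩
    · have hsum : Fintype.card ι • lo ≤ ∑ l, (P ^ m) l j :=
        card_nsmul_le_sum _ _ _ fun l _ => (hlo l).1
      rw [nsmul_eq_mul] at hsum
      nlinarith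
    · have hcol : (P ^ (m + 1)) i j = (P *ᵥ fun l => (P ^ m) l j) i := by
        rw [pow_succ', mul_apply]; rfl
      rw [hcol]
      convert mulVec_apply_mem_Icc hP hPδ hlo i using 2
      ring

theorem eventually_pos_vecMul_pow (hP : P *ᵥ 1 = 1) (hPδ : ∀ i l, δ ≤ P i l) (hδ : 0 < δ)
    {b : ι → ℝ} (hb : 0 < ∑ l, b l) (j : ι) : ∀ᶠ m in atTop, 0 < (b ᵥ* P ^ m) j := by
  set κ := 1 - Fintype.card ι * δ
  have hκ0 : 0 ≤ κ := by
    have h := card_nsmul_le_sum univ (P j) δ fun l _ => hPδ j l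
    rw [card_univ, nsmul_eq_mul, sum_row_eq_one_of_mulVec_one hP] at h
    linarith
  have hκ1 : κ < 1 := by
    have : (0 : ℝ) < Fintype.card ι := Nat.cast_pos.2 (Fintype.card_pos_iff.2 ⟨j⟩)
    simp only [κ]; nlinarith
  have hsmall : ∀ᶠ m in atTop, (∑ l, |b l|) * κ ^ m < (∑ l, b l) * δ := by
    have h := (tendsto_pow_atTop_nhds_zero_of_lt_one hκ0 hκ1).const_mul (∑ l, |b l|)
    rw [mul_zero] at h
    exact h.eventually_lt_const (mul_pos hb hδ)
  filter_upwards [eventually_ge_atTop 1, hsmall] with m hm hsmall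
  obtain ⟨lo, hδlo, hlo⟩ := exists_pow_apply_mem_Icc hP hPδ hδ.le j hm
  have hlower := sum_mul_sub_le_dotProduct b hlo
  have : (∑ l, b l) * δ ≤ (∑ l, b l) * lo := mul_le_mul_of_nonneg_left hδlo hb.le
  exact lt_of_lt_of_le (by linarith) hlower

end Stochastic

variable [DecidableEq ι]

/-- `P = (diagonal v)⁻¹ * C * diagonal v` is row-stochastic with positive entries, and
`(a ᵥ* C ^ m) j = ((a * v) ᵥ* P ^ m) j / v j`. -/
theorem eventually_pos_vecMul_pow_of_pos {C : Matrix ι ι ℝ} {v : ι → ℝ} (hC : ∀ i j, 0 < C i j)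
    (hv : ∀ i, 0 < v i) (hCv : C *ᵥ v = v) {a : ι → ℝ} (ha : 0 < a ⬝ᵥ v) (j : ι) :
    ∀ᶠ m in atTop, 0 < (a ᵥ* C ^ m) j := by
  set P := diagonal v⁻¹ * C * diagonal v
  have hPapply : ∀ i l, P i l = (v i)⁻¹ * C i l * v l := fun i l => by
    simp [P, mul_diagonal, diagonal_mul]
  have hP : P *ᵥ 1 = 1 := by
    have hv1 : diagonal v *ᵥ 1 = v := by ext; simp [mulVec_diagonal]
    ext i
    simp [P, ← mulVec_mulVec, hv1, hCv, mulVec_diagonal, (hv i).ne']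
  have : Nonempty ι := ⟨j⟩
  obtain ⟨t, ht⟩ := Finite.exists_min fun t : ι × ι => P t.1 t.2
  have hδ : 0 < P t.1 t.2 := by
    rw [hPapply]; have := hC t.1 t.2; have := hv t.1; have := hv t.2; positivity
  have hconj : ∀ m, diagonal v⁻¹ * C ^ m = P ^ m * diagonal v⁻¹ := fun m =>
    SemiconjBy.pow_right (by simp [SemiconjBy, P, mul_assoc, fun i => (hv i).ne']) m
  have hCm : ∀ m l, (C ^ m) l j = v l * (P ^ m) l j / v j := fun m l => by
    have h := congrFun (congrFun (hconj m) l) j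
    simp only [diagonal_mul, mul_diagonal, Pi.inv_apply] at h
    field_simp [(hv l).ne', (hv j).ne'] at h ⊢
    linarith
  have hsum : 0 < ∑ l, (a * v) l := by simpa [dotProduct] using ha
  filter_upwards [eventually_pos_vecMul_pow hP (fun i l => ht (i, l)) hδ hsum j] with m hm
  have : (a ᵥ* C ^ m) j = ((a * v) ᵥ* P ^ m) j / v j := by
    simp only [vecMul, dotProduct, hCm, Pi.mul_apply, Finset.sum_div]
    refine Finset.sum_congr rfl fun l _ => by ring
  rw [this]
  exact div_pos hm (hv j)

theorem pow_mulVec_eq_pow_smul {R : Type*} [CommSemiring R] {X : Matrix ι ι R} {v : ι → R}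
    {ρ : R} (hXv : X *ᵥ v = ρ • v) (k : ℕ) : X ^ k *ᵥ v = ρ ^ k • v := by
  induction k with
  | zero => simp
  | succ k ih => rw [pow_succ', ← mulVec_mulVec, ih, mulVec_smul, hXv, smul_smul, ← pow_succ]

theorem eventually_pos_pow_of_pow_pos {X : Matrix ι ι ℝ} {q : ℕ} (hq : 0 < q)
    (hXq : ∀ i j, 0 < (X ^ q) i j) {v : ι → ℝ} {ρ : ℝ} (hρ : 0 < ρ) (hv : ∀ i, 0 < v i)
    (hXv : X *ᵥ v = ρ • v) : ∀ᶠ k in atTop, ∀ i j, 0 < (X ^ k) i j := by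
  have hρq : 0 < ρ ^ q := pow_pos hρ q
  set C := (ρ ^ q)⁻¹ • X ^ q
  have hC : ∀ i j, 0 < C i j := fun i j => by
    simpa [C] using mul_pos (inv_pos.2 hρq) (hXq i j)
  have hCv : C *ᵥ v = v := by
    rw [smul_mulVec, pow_mulVec_eq_pow_smul hXv, smul_smul, inv_mul_cancel₀ hρq.ne', one_smul]
  have hXpow : ∀ r m, X ^ (r + q * m) = (ρ ^ q) ^ m • (X ^ r * C ^ m) := fun r m => by
    rw [pow_add, pow_mul, show X ^ q = ρ ^ q • C by simp [C, smul_smul, hρq.ne'], smul_pow,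
      Matrix.mul_smul]
  refine Nat.eventually_atTop_of_forall_add_mul hq fun r _ => ?_
  simp only [eventually_all]
  intro i j
  have ha : 0 < (X ^ r) i ⬝ᵥ v := by
    have h : (X ^ r) i ⬝ᵥ v = ρ ^ r * v i := congrFun (pow_mulVec_eq_pow_smul hXv r) i
    exact h ▸ mul_pos (pow_pos hρ r) (hv i)
  filter_upwards [eventually_pos_vecMul_pow_of_pos hC hv hCv ha j] with m hm
  rw [hXpow, smul_apply, smul_eq_mul]
  exact mul_pos (pow_pos hρq m) hm

end Matrix

theorem stmt_13_general (n p : ℕ) (A X : Matrix (Fin n) (Fin n) ℝ)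
    (hA : EvPos A) (hX : X ^ p = A) (h1 : StrongPF X) :
    EvPos X := by
  obtain ⟨ρ, hρ, -, -, v, hv, hXv⟩ := h1
  obtain ⟨N, hN⟩ := hA
  obtain ⟨q, hq, hXq⟩ : ∃ q, 0 < q ∧ ∀ i j, 0 < (X ^ q) i j := by
    rcases p.eq_zero_or_pos with rfl | hp
    · have : Subsingleton (Fin n) :=
        subsingleton_of_forall_one_apply_pos (by simpa [← hX] using hN N le_rfl)
      exact ⟨1, one_pos, by simpa using apply_pos_of_subsingleton_of_mulVec_eq_smul hρ hv hXv⟩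
    · exact ⟨p * (N + 1), by positivity, by rw [pow_mul, hX]; exact hN _ (by omega)⟩
  exact eventually_atTop.1 (eventually_pos_pow_of_pow_pos hq hXq hρ hv hXv)

/-- if `A` is eventually positive and `X` is a real `p`th-root of
`A` such that both `X` and `Xᵀ` have the strong Perron-Frobenius property, then
`X` is eventually positive. -/
theorem stmt_13 (n p : ℕ) (A X : Matrix (Fin n) (Fin n) ℝ)
    (hA : EvPos A) (hX : X ^ p = A) (h1 : StrongPF X) (h2 : StrongPF Xᵀ) :
    EvPos X :=
  stmt_13_general n p A X hA hX h1
end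

section
/- Let A be a real n×n matrix with the strong Perron-Frobenius property with spectral radius ρ, and let X be a real matrix with X^p = A such that the eigenvalue of X whose pth power is ρ equals the real positive pth root ρ^{1/p}, with the same (positive) eigenvector. Then ρ^{1/p} is the spectral radius of X, it is a simple eigenvalue of X, and it strictly dominates in modulus every other eigenvalue of X; i.e., X has the strong Perron-Frobenius property. -/
/-!
If `(f - μ)ᵏ x = 0` then `(fᵖ - μᵖ)ᵏ x = 0`, because `t - μ` divides `tᵖ - μᵖ`. So the generalized
eigenspace of `X` at `μ` lies in that of `A = Xᵖ` at `μᵖ`; as generalized eigenspaces for distinct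
eigenvalues are independent and their dimensions are the algebraic multiplicities, the
multiplicities of the eigenvalues `μ` of `X` with `μᵖ = ρ` add up to at most that of `ρ` for `A`,
namely `1`. Hence `r = ρ^(1/p)` is a simple eigenvalue of `X` and the only one with `μᵖ = ρ`;
every other eigenvalue `μ` of `X` gives an eigenvalue `μᵖ ≠ ρ` of `A`, so `‖μ‖ᵖ < ρ = rᵖ`.
-/

open Matrix Polynomial

namespace Module.End

variable {K V : Type*} [Field K] [AddCommGroup V] [Module K V]

theorem maxGenEigenspace_le_maxGenEigenspace_pow (f : End K V) (μ : K) (p : ℕ) :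
    f.maxGenEigenspace μ ≤ (f ^ p).maxGenEigenspace (μ ^ p) := by
  intro x hx
  obtain ⟨k, hk⟩ := (mem_maxGenEigenspace f μ x).1 hx
  refine (mem_maxGenEigenspace _ _ x).2 ⟨k, ?_⟩
  obtain ⟨q, hq⟩ := sub_dvd_pow_sub_pow (X : K[X]) (C μ) p
  have hpow : f ^ p - μ ^ p • 1 = aeval f (X ^ p - C μ ^ p) := by
    simp [Algebra.algebraMap_eq_smul_one, _root_.smul_pow]
  have hlin : f - μ • 1 = aeval f (X - C μ) := by
    simp [Algebra.algebraMap_eq_smul_one]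
  have hfactor : (f ^ p - μ ^ p • 1) ^ k = aeval f (q ^ k) * (f - μ • 1) ^ k := by
    rw [hpow, hlin, hq, ← map_pow, ← map_pow, ← map_mul, mul_pow, mul_comm]
  rw [hfactor, mul_apply, hk, map_zero]

end Module.End

namespace LinearMap

open Module Module.End

variable {K V : Type*} [Field K] [AddCommGroup V] [Module K V] [FiniteDimensional K V]

theorem rootMultiplicity_charpoly_le_pow (f : End K V) (μ : K) (p : ℕ) :
    f.charpoly.rootMultiplicity μ ≤ (f ^ p).charpoly.rootMultiplicity (μ ^ p) := by
  rw [← finrank_maxGenEigenspace_eq, ← finrank_maxGenEigenspace_eq]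
  exact Submodule.finrank_mono (maxGenEigenspace_le_maxGenEigenspace_pow f μ p)

theorem rootMultiplicity_charpoly_add_le_pow (f : End K V) {μ ν : K} (hμν : μ ≠ ν) {p : ℕ}
    (hp : μ ^ p = ν ^ p) :
    f.charpoly.rootMultiplicity μ + f.charpoly.rootMultiplicity ν ≤
      (f ^ p).charpoly.rootMultiplicity (μ ^ p) := by
  rw [← finrank_maxGenEigenspace_eq, ← finrank_maxGenEigenspace_eq, ← finrank_maxGenEigenspace_eq,
    ← Submodule.finrank_sup_add_finrank_inf_eq, (f.disjoint_genEigenspace hμν ⊤ ⊤).eq_bot,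
    finrank_bot, add_zero]
  refine Submodule.finrank_mono (sup_le ?_ ?_)
  · exact maxGenEigenspace_le_maxGenEigenspace_pow f μ p
  · exact hp ▸ maxGenEigenspace_le_maxGenEigenspace_pow f ν p

end LinearMap

namespace Matrix

variable {ι K : Type*} [Fintype ι] [DecidableEq ι] [Field K]

theorem rootMultiplicity_charpoly_le_pow (M : Matrix ι ι K) (μ : K) (p : ℕ) :
    M.charpoly.rootMultiplicity μ ≤ (M ^ p).charpoly.rootMultiplicity (μ ^ p) := by
  simpa only [← toLin'_pow, charpoly_toLin'] using
    (toLin' M).rootMultiplicity_charpoly_le_pow μ p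

theorem rootMultiplicity_charpoly_add_le_pow (M : Matrix ι ι K) {μ ν : K} (hμν : μ ≠ ν) {p : ℕ}
    (hp : μ ^ p = ν ^ p) :
    M.charpoly.rootMultiplicity μ + M.charpoly.rootMultiplicity ν ≤
      (M ^ p).charpoly.rootMultiplicity (μ ^ p) := by
  simpa only [← toLin'_pow, charpoly_toLin'] using
    (toLin' M).rootMultiplicity_charpoly_add_le_pow hμν hp

theorem rootMultiplicity_charpoly_map {L : Type*} [Field L] (M : Matrix ι ι K) {f : K →+* L}
    (a : K) : (M.map f).charpoly.rootMultiplicity (f a) = M.charpoly.rootMultiplicity a := by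
  rw [charpoly_map, ← eq_rootMultiplicity_map f.injective]

theorem one_le_rootMultiplicity_charpoly_iff_mem_spectrum (M : Matrix ι ι K) (μ : K) :
    1 ≤ M.charpoly.rootMultiplicity μ ↔ μ ∈ spectrum K M :=
  (rootMultiplicity_pos (charpoly_monic M).ne_zero).trans mem_spectrum_iff_isRoot_charpoly.symm

theorem one_le_rootMultiplicity_charpoly_of_mulVec_eq_smul (M : Matrix ι ι K) {μ : K}
    {v : ι → K} (hv : v ≠ 0) (hMv : M *ᵥ v = μ • v) : 1 ≤ M.charpoly.rootMultiplicity μ := by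
  refine (rootMultiplicity_pos (charpoly_monic M).ne_zero).2 ?_
  rw [← charpoly_toLin', ← Module.End.hasEigenvalue_iff_isRoot_charpoly]
  exact Module.End.hasEigenvalue_of_hasEigenvector
    ⟨by simpa [Module.End.mem_eigenspace_iff] using hMv, hv⟩

theorem eq_of_pow_eq_of_rootMultiplicity_charpoly_pow_eq_one (M : Matrix ι ι K) {μ ν : K}
    (hμ : μ ∈ spectrum K M) (hν : ν ∈ spectrum K M) {p : ℕ} (hμν : μ ^ p = ν ^ p)
    (hsimple : (M ^ p).charpoly.rootMultiplicity (μ ^ p) = 1) : μ = ν := by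
  by_contra hne
  have hsum := M.rootMultiplicity_charpoly_add_le_pow hne hμν
  rw [← one_le_rootMultiplicity_charpoly_iff_mem_spectrum] at hμ hν
  omega

end Matrix

theorem stmt_18_general (n p : ℕ) (hp : 1 ≤ p) (A X : Matrix (Fin n) (Fin n) ℝ)
    (ρ : ℝ) (hρ : 0 < ρ)
    (hsimple : (Matrix.charpoly A).rootMultiplicity ρ = 1)
    (hdom : ∀ μ : ℂ, μ ∈ spectrum ℂ (A.map Complex.ofReal) → μ ≠ (ρ : ℂ) →
      ‖μ‖ < ρ)
    (v : Fin n → ℝ) (hv : ∀ i, 0 < v i)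
    (hXp : X ^ p = A)
    (hXv : X.mulVec v = (ρ ^ ((1 : ℝ)/p)) • v) :
    0 < ρ ^ ((1 : ℝ)/p) ∧
    (Matrix.charpoly X).rootMultiplicity (ρ ^ ((1 : ℝ)/p)) = 1 ∧
    (∀ μ : ℂ, μ ∈ spectrum ℂ (X.map Complex.ofReal) → μ ≠ ((ρ ^ ((1 : ℝ)/p) : ℝ) : ℂ) →
      ‖μ‖ < ρ ^ ((1 : ℝ)/p)) ∧
    ∃ w : Fin n → ℝ, (∀ i, 0 < w i) ∧ X.mulVec w = (ρ ^ ((1 : ℝ)/p)) • w := by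
  set r := ρ ^ ((1 : ℝ)/p)
  have hr : 0 < r := by positivity
  have hrp : r ^ p = ρ := by
    simpa only [r, one_div] using Real.rpow_inv_natCast_pow hρ.le (n := p) (by omega)
  have : Nonempty (Fin n) := not_isEmpty_iff.1 fun _ => by
    rw [charpoly_isEmpty, ← C_1, rootMultiplicity_C] at hsimple
    exact zero_ne_one hsimple
  have hv0 : v ≠ 0 := fun h => (hv (Classical.arbitrary _)).ne' (congrFun h _)
  have hmult : X.charpoly.rootMultiplicity r = 1 :=
    le_antisymm (hsimple ▸ hrp ▸ hXp ▸ X.rootMultiplicity_charpoly_le_pow r p)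
      (X.one_le_rootMultiplicity_charpoly_of_mulVec_eq_smul hv0 hXv)
  refine ⟨hr, hmult, fun μ hμ hμr => ?_, v, hv, hXv⟩
  set XC := X.map Complex.ofReal
  set AC := A.map Complex.ofReal
  have hXpC : XC ^ p = AC := by
    simp only [XC, AC, ← hXp]
    exact (map_pow Complex.ofRealHom.mapMatrix X p).symm
  have hmultC (M : Matrix (Fin n) (Fin n) ℝ) (a : ℝ) :
      (M.map Complex.ofReal).charpoly.rootMultiplicity (a : ℂ) = M.charpoly.rootMultiplicity a :=
    M.rootMultiplicity_charpoly_map (f := Complex.ofRealHom) a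
  by_cases hμp : μ ^ p = ρ
  · have hrC : (r : ℂ) ∈ spectrum ℂ XC := by
      rw [← one_le_rootMultiplicity_charpoly_iff_mem_spectrum, hmultC, hmult]
    refine absurd (XC.eq_of_pow_eq_of_rootMultiplicity_charpoly_pow_eq_one hμ hrC
      (p := p) ?_ ?_) hμr
    · rw [hμp, ← hrp]; push_cast; rfl
    · rw [hXpC, hμp, hmultC, hsimple]
  · have h := hdom _ (hXpC ▸ spectrum.pow_mem_pow XC p hμ) hμp
    rw [norm_pow, ← hrp] at h
    exact lt_of_pow_lt_pow_left₀ p hr.le h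

/-- let `A` be a real matrix with the strong Perron-Frobenius
property (spectral radius `ρ`: positive, algebraically simple, strictly dominant
in modulus, with positive eigenvector `v`), and let `X` be a real `p`th-root of
`A` whose eigenvalue on the Perron eigenvector `v` is the real positive root
`ρ^{1/p}`.  Then `ρ^{1/p}` is a simple eigenvalue of `X` strictly dominating in
modulus every other eigenvalue of `X` (so it is the spectral radius of `X`), and
`X` has a positive eigenvector for it; i.e. `X` has the strong Perron-Frobenius
property. -/
theorem stmt_18 (n p : ℕ) (hp : 1 ≤ p) (A X : Matrix (Fin n) (Fin n) ℝ)
    (ρ : ℝ) (hρ : 0 < ρ)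
    (hsimple : (Matrix.charpoly A).rootMultiplicity ρ = 1)
    (hdom : ∀ μ : ℂ, μ ∈ spectrum ℂ (A.map Complex.ofReal) → μ ≠ (ρ : ℂ) →
      ‖μ‖ < ρ)
    (v : Fin n → ℝ) (hv : ∀ i, 0 < v i) (hAv : A.mulVec v = ρ • v)
    (hXp : X ^ p = A)
    (hXv : X.mulVec v = (ρ ^ ((1 : ℝ)/p)) • v) :
    0 < ρ ^ ((1 : ℝ)/p) ∧
    (Matrix.charpoly X).rootMultiplicity (ρ ^ ((1 : ℝ)/p)) = 1 ∧
    (∀ μ : ℂ, μ ∈ spectrum ℂ (X.map Complex.ofReal) → μ ≠ ((ρ ^ ((1 : ℝ)/p) : ℝ) : ℂ) →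
      ‖μ‖ < ρ ^ ((1 : ℝ)/p)) ∧
    ∃ w : Fin n → ℝ, (∀ i, 0 < w i) ∧ X.mulVec w = (ρ ^ ((1 : ℝ)/p)) • w :=
  stmt_18_general n p hp A X ρ hρ hsimple hdom v hv hXp hXv
end
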